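/- Fix d ≥ 1, λ > 0, M ≥ 1 and k ≥ 1. Let f : ℝ^d → ℝ be differentiable, let x_1, …, x_k ∈ ℝ^d with ∇f(x_k) ≠ 0, and let s_1, …, s_{k−1} ∈ ℝ^d be unit vectors. Set ℓ(k) := max{1, k − M − 1}, C_k := λ I_d + Σ_{j=ℓ(k)}^{k−1} s_j s_jᵀ, b_k := Σ_{j=ℓ(k)}^{k−1} ⟨∇f(x_j), s_j⟩ s_j, g_k := C_k⁻¹ b_k, and β_k := √(d(M+1)/λ) · Σ_{i=ℓ(k)}^{k−1} ‖∇f(x_{i+1}) − ∇f(x_i)‖. Let U_k ≥ ‖∇f(x_k)‖, let s_k be a maximizer of the map s ↦ ⟨g_k, s⟩ + √λ · U_k · ‖s‖_{C_k⁻¹} over the unit sphere {s ∈ ℝ^d : ‖s‖ = 1}, and set s_k* := ∇f(x_k)/‖∇f(x_k)‖. Then ⟨s_k* − s_k, ∇f(x_k)⟩ ≤ 2β_k + 2√λ · U_k · ‖s_k‖_{C_k⁻¹}. -/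

import Mathlib

open Matrix Finset

/-- The Euclidean norm on `Fin n → ℝ`. -/
noncomputable def euclNorm {n : ℕ} (v : Fin n → ℝ) : ℝ := Real.sqrt (∑ i, v i ^ 2)

/-!
Write `g = ∇f(x_k)` and `ĝ = C⁻¹ b` for the ridge estimate built from the observations
`⟨∇f(x_j), s_j⟩` in the window. Since `C g - b = λ g - ∑ⱼ ⟨∇f(x_j) - g, s_j⟩ s_j`, the error
`⟨v, g - ĝ⟩` splits into a regularization bias `λ ⟨v, C⁻¹ g⟩`, at most `√λ ‖g‖ ‖v‖_{C⁻¹}` because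
`C ⪰ λ I`, and a drift term. In the drift term each `|⟨∇f(x_j) - g, s_j⟩|` is at most the total
gradient variation over the window (telescoping), and `∑ⱼ ‖s_j‖_{C⁻¹} ≤ √(#window · d)` by
Cauchy–Schwarz, since `∑ⱼ s_jᵀ C⁻¹ s_j = tr (C⁻¹ (C - λ I)) ≤ d`. Evaluating this confidence bound
at `s*` and at the optimistic choice `s_k` gives the usual UCB chain
`⟨s*, g⟩ ≤ UCB(s*) + β ≤ UCB(s_k) + β ≤ ⟨s_k, g⟩ + 2β + 2 √λ U ‖s_k‖_{C⁻¹}`.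
-/

section EuclNorm

variable {n : ℕ}

lemma euclNorm_eq_norm_toLp (v : Fin n → ℝ) : euclNorm v = ‖WithLp.toLp 2 v‖ := by
  simp [euclNorm, EuclideanSpace.norm_eq]

lemma euclNorm_nonneg (v : Fin n → ℝ) : 0 ≤ euclNorm v := Real.sqrt_nonneg _

lemma dotProduct_self_eq_euclNorm_sq (v : Fin n → ℝ) : v ⬝ᵥ v = euclNorm v ^ 2 := by
  rw [euclNorm, Real.sq_sqrt (by positivity)]
  simp [dotProduct, sq]

lemma abs_dotProduct_le_euclNorm_mul (u v : Fin n → ℝ) :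
    |u ⬝ᵥ v| ≤ euclNorm u * euclNorm v := by
  simpa [euclNorm_eq_norm_toLp, EuclideanSpace.inner_eq_star_dotProduct, dotProduct_comm v] using
    abs_real_inner_le_norm (WithLp.toLp 2 u) (WithLp.toLp 2 v)

lemma euclNorm_inv_smul_self {v : Fin n → ℝ} (hv : v ≠ 0) :
    euclNorm ((euclNorm v)⁻¹ • v) = 1 := by
  simp only [euclNorm_eq_norm_toLp, WithLp.toLp_smul]
  exact norm_smul_inv_norm (by simpa using hv)

lemma euclNorm_sub_le_sum_of_Ico_subset (a : ℕ → Fin n → ℝ) {j k : ℕ} (hjk : j ≤ k)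
    {t : Finset ℕ} (ht : Ico j k ⊆ t) :
    euclNorm (a j - a k) ≤ ∑ i ∈ t, euclNorm (a (i + 1) - a i) := by
  calc euclNorm (a j - a k)
      ≤ ∑ i ∈ Ico j k, euclNorm (a (i + 1) - a i) := by
        simp only [euclNorm_eq_norm_toLp, WithLp.toLp_sub, ← dist_eq_norm]
        refine (dist_le_Ico_sum_dist (fun i => WithLp.toLp 2 (a i)) hjk).trans_eq ?_
        exact sum_congr rfl fun i _ => dist_comm _ _
    _ ≤ ∑ i ∈ t, euclNorm (a (i + 1) - a i) :=
        sum_le_sum_of_subset_of_nonneg ht fun _ _ _ => euclNorm_nonneg _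

end EuclNorm

section Ridge

variable {m κ : Type*} [Fintype m]

noncomputable def weightedNorm (A : Matrix m m ℝ) (v : m → ℝ) : ℝ := √(v ⬝ᵥ (A *ᵥ v))

lemma weightedNorm_nonneg (A : Matrix m m ℝ) (v : m → ℝ) : 0 ≤ weightedNorm A v :=
  Real.sqrt_nonneg _

lemma abs_dotProduct_mulVec_le_weightedNorm_mul {A : Matrix m m ℝ} (hA : A.PosSemidef)
    (u v : m → ℝ) : |u ⬝ᵥ (A *ᵥ v)| ≤ weightedNorm A u * weightedNorm A v := by
  simp only [weightedNorm, dotProduct_comm u, dotProduct_comm v]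
  exact @abs_real_inner_le_norm _ (A.toSeminormedAddCommGroup hA) (A.toInnerProductSpace hA) u v

lemma posSemidef_sum_vecMulVec_self (t : Finset κ) (s : κ → m → ℝ) :
    (∑ j ∈ t, vecMulVec (s j) (s j)).PosSemidef :=
  posSemidef_sum t fun j _ => by simpa using posSemidef_vecMulVec_self_star (s j)

variable [DecidableEq m]

lemma dotProduct_inv_mulVec_le {C : Matrix m m ℝ} {lam : ℝ} (hC : C.PosDef) (hlam : 0 < lam)
    (hCl : (C - lam • 1).PosSemidef) (v : m → ℝ) :
    v ⬝ᵥ (C⁻¹ *ᵥ v) ≤ (v ⬝ᵥ v) / lam := by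
  set w := C⁻¹ *ᵥ v
  have hCw : C *ᵥ w = v := by
    rw [mulVec_mulVec, mul_nonsing_inv _ ((isUnit_iff_isUnit_det C).1 hC.isUnit), one_mulVec]
  have hlow : lam * (w ⬝ᵥ w) ≤ v ⬝ᵥ w := by
    have := hCl.dotProduct_mulVec_nonneg w
    rw [sub_mulVec, hCw, smul_mulVec, one_mulVec, star_trivial, dotProduct_sub,
      dotProduct_smul, smul_eq_mul, dotProduct_comm] at this
    linarith
  have hcs : (v ⬝ᵥ w) ^ 2 ≤ (v ⬝ᵥ v) * (w ⬝ᵥ w) := by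
    simpa only [dotProduct, sq] using sum_mul_sq_le_sq_mul_sq univ v w
  have hww : 0 ≤ w ⬝ᵥ w := by
    simpa only [dotProduct, ← sq] using sum_nonneg fun i _ => sq_nonneg (w i)
  have hvv : 0 ≤ v ⬝ᵥ v := by
    simpa only [dotProduct, ← sq] using sum_nonneg fun i _ => sq_nonneg (v i)
  rw [le_div_iff₀ hlam]
  rcases (le_trans (by positivity) hlow).eq_or_lt with hq | hq
  · rw [← hq, zero_mul]
    exact hvv
  · nlinarith

noncomputable def regularizedGram (lam : ℝ) (t : Finset κ) (s : κ → m → ℝ) : Matrix m m ℝ :=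
  lam • 1 + ∑ j ∈ t, vecMulVec (s j) (s j)

variable {lam : ℝ} {t : Finset κ} {s : κ → m → ℝ}

lemma posDef_regularizedGram (hlam : 0 < lam) : (regularizedGram lam t s).PosDef :=
  (PosDef.one.smul hlam).add_posSemidef (posSemidef_sum_vecMulVec_self t s)

lemma regularizedGram_mulVec (w : m → ℝ) :
    regularizedGram lam t s *ᵥ w = lam • w + ∑ j ∈ t, (s j ⬝ᵥ w) • s j := by
  simp [regularizedGram, add_mulVec, smul_mulVec, sum_mulVec, vecMulVec_mulVec]

lemma sum_dotProduct_inv_regularizedGram_mulVec_le (hlam : 0 < lam) :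
    ∑ j ∈ t, s j ⬝ᵥ ((regularizedGram lam t s)⁻¹ *ᵥ s j) ≤ Fintype.card m := by
  set C := regularizedGram lam t s
  have hC : C.PosDef := posDef_regularizedGram hlam
  have htrace : ∑ j ∈ t, s j ⬝ᵥ (C⁻¹ *ᵥ s j) = trace (C⁻¹ * (C - lam • 1)) := by
    simp only [C, regularizedGram, add_sub_cancel_left, mul_sum, trace_sum, mul_vecMulVec,
      trace_vecMulVec, dotProduct_comm (s _)]
  rw [htrace, mul_sub, nonsing_inv_mul _ ((isUnit_iff_isUnit_det C).1 hC.isUnit),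
    Matrix.mul_smul, mul_one, trace_sub, trace_smul, trace_one, smul_eq_mul]
  nlinarith [hC.inv.posSemidef.trace_nonneg]

lemma sum_weightedNorm_inv_regularizedGram_le (hlam : 0 < lam) :
    ∑ j ∈ t, weightedNorm (regularizedGram lam t s)⁻¹ (s j) ≤ √(#t : ℝ) * √(Fintype.card m) := by
  have hq : ∀ j, 0 ≤ s j ⬝ᵥ ((regularizedGram lam t s)⁻¹ *ᵥ s j) := fun j => by
    simpa using (posDef_regularizedGram hlam).inv.posSemidef.dotProduct_mulVec_nonneg (s j)
  calc ∑ j ∈ t, weightedNorm (regularizedGram lam t s)⁻¹ (s j)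
      = ∑ j ∈ t, √1 * weightedNorm (regularizedGram lam t s)⁻¹ (s j) := by simp
    _ ≤ √(∑ j ∈ t, (1 : ℝ)) * √(∑ j ∈ t, s j ⬝ᵥ ((regularizedGram lam t s)⁻¹ *ᵥ s j)) :=
        Real.sum_sqrt_mul_sqrt_le t (fun _ => zero_le_one) hq
    _ ≤ √(#t : ℝ) * √(Fintype.card m) := by
        rw [sum_const, nsmul_one]
        gcongr
        exact sum_dotProduct_inv_regularizedGram_mulVec_le hlam

noncomputable def ridgeEstimate (lam : ℝ) (t : Finset κ) (s a : κ → m → ℝ) : m → ℝ :=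
  (regularizedGram lam t s)⁻¹ *ᵥ ∑ j ∈ t, (a j ⬝ᵥ s j) • s j

lemma dotProduct_sub_ridgeEstimate (hlam : 0 < lam) (a : κ → m → ℝ) (g v : m → ℝ) :
    v ⬝ᵥ (g - ridgeEstimate lam t s a) =
      lam * (v ⬝ᵥ ((regularizedGram lam t s)⁻¹ *ᵥ g)) -
        ∑ j ∈ t, ((a j - g) ⬝ᵥ s j) * (v ⬝ᵥ ((regularizedGram lam t s)⁻¹ *ᵥ s j)) := by
  set C := regularizedGram lam t s
  have hC : C.PosDef := posDef_regularizedGram hlam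
  have hg : g = C⁻¹ *ᵥ (C *ᵥ g) := by
    rw [mulVec_mulVec, nonsing_inv_mul _ ((isUnit_iff_isUnit_det C).1 hC.isUnit), one_mulVec]
  have hresidual : C *ᵥ g - ∑ j ∈ t, (a j ⬝ᵥ s j) • s j =
      lam • g - ∑ j ∈ t, ((a j - g) ⬝ᵥ s j) • s j := by
    simp only [C, regularizedGram_mulVec, sub_dotProduct, sub_smul, sum_sub_distrib,
      dotProduct_comm g]
    abel
  calc v ⬝ᵥ (g - ridgeEstimate lam t s a)
      = v ⬝ᵥ (C⁻¹ *ᵥ (C *ᵥ g - ∑ j ∈ t, (a j ⬝ᵥ s j) • s j)) := by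
        rw [ridgeEstimate, mulVec_sub, ← hg]
    _ = _ := by
        simp only [hresidual, mulVec_sub, mulVec_smul, mulVec_sum, dotProduct_sub, dotProduct_sum,
          dotProduct_smul, smul_eq_mul]

end Ridge

section Confidence

variable {n : ℕ} {κ : Type*} {lam : ℝ} {t : Finset κ} {s : κ → Fin n → ℝ}

lemma weightedNorm_inv_regularizedGram_le (hlam : 0 < lam) (v : Fin n → ℝ) :
    weightedNorm (regularizedGram lam t s)⁻¹ v ≤ euclNorm v / √lam := by
  rw [weightedNorm, ← Real.sqrt_sq (euclNorm_nonneg v), ← Real.sqrt_div' _ hlam.le,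
    ← dotProduct_self_eq_euclNorm_sq]
  gcongr
  refine dotProduct_inv_mulVec_le (posDef_regularizedGram hlam) hlam ?_ v
  rw [regularizedGram, add_sub_cancel_left]
  exact posSemidef_sum_vecMulVec_self t s

lemma abs_mul_dotProduct_inv_regularizedGram_mulVec_le (hlam : 0 < lam) (g v : Fin n → ℝ) :
    |lam * (v ⬝ᵥ ((regularizedGram lam t s)⁻¹ *ᵥ g))| ≤
      √lam * euclNorm g * weightedNorm (regularizedGram lam t s)⁻¹ v := by
  set A := (regularizedGram lam t s)⁻¹
  have hA : A.PosSemidef := (posDef_regularizedGram hlam).inv.posSemidef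
  calc |lam * (v ⬝ᵥ (A *ᵥ g))|
      = lam * |v ⬝ᵥ (A *ᵥ g)| := by rw [abs_mul, abs_of_pos hlam]
    _ ≤ lam * (weightedNorm A v * (euclNorm g / √lam)) := by
        gcongr
        refine (abs_dotProduct_mulVec_le_weightedNorm_mul hA v g).trans ?_
        gcongr
        · exact Real.sqrt_nonneg _
        · exact weightedNorm_inv_regularizedGram_le hlam g
    _ = lam / √lam * euclNorm g * weightedNorm A v := by ring
    _ = √lam * euclNorm g * weightedNorm A v := by rw [Real.div_sqrt]

lemma abs_sum_mul_dotProduct_inv_regularizedGram_mulVec_le (hlam : 0 < lam) {c : κ → ℝ}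
    {S : ℝ} (hc : ∀ j ∈ t, |c j| ≤ S) (v : Fin n → ℝ) :
    |∑ j ∈ t, c j * (v ⬝ᵥ ((regularizedGram lam t s)⁻¹ *ᵥ s j))| ≤
      S * √(n * #t / lam) * euclNorm v := by
  set A := (regularizedGram lam t s)⁻¹
  have hA : A.PosSemidef := (posDef_regularizedGram hlam).inv.posSemidef
  obtain rfl | ⟨j₀, hj₀⟩ := t.eq_empty_or_nonempty
  · simp
  have hS : 0 ≤ S := (abs_nonneg _).trans (hc j₀ hj₀)
  calc |∑ j ∈ t, c j * (v ⬝ᵥ (A *ᵥ s j))|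
      ≤ ∑ j ∈ t, S * (weightedNorm A v * weightedNorm A (s j)) := by
        refine (abs_sum_le_sum_abs _ _).trans (sum_le_sum fun j hj => ?_)
        rw [abs_mul]
        exact mul_le_mul (hc j hj) (abs_dotProduct_mulVec_le_weightedNorm_mul hA v (s j))
          (abs_nonneg _) hS
    _ = S * weightedNorm A v * ∑ j ∈ t, weightedNorm A (s j) := by
        rw [mul_sum]
        exact sum_congr rfl fun j _ => by ring
    _ ≤ S * (euclNorm v / √lam) * (√(#t : ℝ) * √n) := by
        refine mul_le_mul (mul_le_mul_of_nonneg_left ?_ hS) ?_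
          (sum_nonneg fun j _ => weightedNorm_nonneg _ _) (by positivity [euclNorm_nonneg v])
        · exact weightedNorm_inv_regularizedGram_le hlam v
        · simpa using sum_weightedNorm_inv_regularizedGram_le (t := t) (s := s) hlam
    _ = S * √(n * #t / lam) * euclNorm v := by
        rw [Real.sqrt_div' _ hlam.le, Real.sqrt_mul (Nat.cast_nonneg _)]
        ring

lemma abs_dotProduct_sub_ridgeEstimate_le (hlam : 0 < lam) {a : κ → Fin n → ℝ} {g : Fin n → ℝ}
    {S : ℝ} (hdev : ∀ j ∈ t, |(a j - g) ⬝ᵥ s j| ≤ S) (v : Fin n → ℝ) :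
    |v ⬝ᵥ (g - ridgeEstimate lam t s a)| ≤
      S * √(n * #t / lam) * euclNorm v +
        √lam * euclNorm g * weightedNorm (regularizedGram lam t s)⁻¹ v := by
  rw [dotProduct_sub_ridgeEstimate hlam, add_comm]
  exact (abs_sub _ _).trans (add_le_add
    (abs_mul_dotProduct_inv_regularizedGram_mulVec_le hlam g v)
    (abs_sum_mul_dotProduct_inv_regularizedGram_mulVec_le hlam hdev v))

end Confidence

lemma sub_dotProduct_le_of_optimistic {m : Type*} [Fintype m] {g ĝ s₁ s₂ : m → ℝ}
    {β w₁ w₂ : ℝ} (h₁ : |s₁ ⬝ᵥ (g - ĝ)| ≤ β + w₁) (h₂ : |s₂ ⬝ᵥ (g - ĝ)| ≤ β + w₂)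
    (hmax : ĝ ⬝ᵥ s₁ + w₁ ≤ ĝ ⬝ᵥ s₂ + w₂) :
    (s₁ - s₂) ⬝ᵥ g ≤ 2 * β + 2 * w₂ := by
  rw [dotProduct_sub] at h₁ h₂
  rw [dotProduct_comm ĝ, dotProduct_comm ĝ] at hmax
  rw [sub_dotProduct]
  linarith [le_abs_self (s₁ ⬝ᵥ g - s₁ ⬝ᵥ ĝ), neg_abs_le (s₂ ⬝ᵥ g - s₂ ⬝ᵥ ĝ)]

theorem stmt_12_general (d M k : ℕ)
    (lam : ℝ) (hlam : 0 < lam)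
    (gradf : (Fin d → ℝ) → Fin d → ℝ)
    (x : ℕ → Fin d → ℝ) (hgx : gradf (x k) ≠ 0)
    (s : ℕ → Fin d → ℝ)
    (hs : ∀ j ∈ Finset.Icc 1 (k - 1), euclNorm (s j) = 1)
    (C : Matrix (Fin d) (Fin d) ℝ) (b gk : Fin d → ℝ)
    (hC : C = lam • (1 : Matrix (Fin d) (Fin d) ℝ) +
      ∑ j ∈ Finset.Icc (max 1 (k - M - 1)) (k - 1), vecMulVec (s j) (s j))
    (hb : b = ∑ j ∈ Finset.Icc (max 1 (k - M - 1)) (k - 1), (gradf (x j) ⬝ᵥ s j) • s j)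
    (hgk : gk = C⁻¹ *ᵥ b)
    (U : ℝ) (hU : euclNorm (gradf (x k)) ≤ U)
    (sk : Fin d → ℝ) (hsk1 : euclNorm sk = 1)
    (hskmax : ∀ sv : Fin d → ℝ, euclNorm sv = 1 →
      gk ⬝ᵥ sv + Real.sqrt lam * U * Real.sqrt (sv ⬝ᵥ (C⁻¹ *ᵥ sv)) ≤
      gk ⬝ᵥ sk + Real.sqrt lam * U * Real.sqrt (sk ⬝ᵥ (C⁻¹ *ᵥ sk))) :
    ((euclNorm (gradf (x k)))⁻¹ • gradf (x k) - sk) ⬝ᵥ gradf (x k) ≤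
      2 * (Real.sqrt ((d : ℝ) * ((M : ℝ) + 1) / lam) *
        ∑ i ∈ Finset.Icc (max 1 (k - M - 1)) (k - 1),
          euclNorm (gradf (x (i + 1)) - gradf (x i))) +
      2 * Real.sqrt lam * U * Real.sqrt (sk ⬝ᵥ (C⁻¹ *ᵥ sk)) := by
  set t := Icc (max 1 (k - M - 1)) (k - 1)
  set S := ∑ i ∈ t, euclNorm (gradf (x (i + 1)) - gradf (x i))
  obtain rfl : C = regularizedGram lam t s := hC
  subst hb
  obtain rfl : gk = ridgeEstimate lam t s (fun j => gradf (x j)) := hgk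
  have hdev : ∀ j ∈ t, |(gradf (x j) - gradf (x k)) ⬝ᵥ s j| ≤ S := fun j hj => by
    rw [mem_Icc] at hj
    calc |(gradf (x j) - gradf (x k)) ⬝ᵥ s j|
        ≤ euclNorm (gradf (x j) - gradf (x k)) * euclNorm (s j) :=
          abs_dotProduct_le_euclNorm_mul _ _
      _ = euclNorm (gradf (x j) - gradf (x k)) := by
          rw [hs j (mem_Icc.2 ⟨by omega, hj.2⟩), mul_one]
      _ ≤ S := euclNorm_sub_le_sum_of_Ico_subset (fun i => gradf (x i)) (by omega)
          fun i hi => by rw [mem_Ico] at hi; rw [mem_Icc]; omega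
  have hcard : (#t : ℝ) ≤ M + 1 := by
    rw [Nat.card_Icc]
    exact_mod_cast (by omega : k - 1 + 1 - max 1 (k - M - 1) ≤ M + 1)
  have hconf : ∀ v, euclNorm v = 1 →
      |v ⬝ᵥ (gradf (x k) - ridgeEstimate lam t s (fun j => gradf (x j)))| ≤
        √(d * (M + 1) / lam) * S + √lam * U * weightedNorm (regularizedGram lam t s)⁻¹ v :=
    fun v hv => by
      refine (abs_dotProduct_sub_ridgeEstimate_le hlam hdev v).trans ?_
      rw [hv, mul_one, mul_comm S]
      have hS : 0 ≤ S := sum_nonneg fun _ _ => euclNorm_nonneg _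
      gcongr
      exact weightedNorm_nonneg _ _
  have hstar := euclNorm_inv_smul_self hgx
  exact (sub_dotProduct_le_of_optimistic (hconf _ hstar) (hconf sk hsk1) (hskmax _ hstar)).trans_eq
    (by rw [weightedNorm]; ring)

/-- Per-round instantaneous regret bound of the linear UCB action
(from the proof of Theorem 3.3). -/
theorem stmt_12 (d M k : ℕ) (hd : 1 ≤ d) (hM : 1 ≤ M) (hk : 1 ≤ k)
    (lam : ℝ) (hlam : 0 < lam)
    (f : (Fin d → ℝ) → ℝ) (gradf : (Fin d → ℝ) → Fin d → ℝ)
    (hdiff : Differentiable ℝ f)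
    (hgrad : ∀ x v, fderiv ℝ f x v = gradf x ⬝ᵥ v)
    (x : ℕ → Fin d → ℝ) (hgx : gradf (x k) ≠ 0)
    (s : ℕ → Fin d → ℝ)
    (hs : ∀ j ∈ Finset.Icc 1 (k - 1), euclNorm (s j) = 1)
    (C : Matrix (Fin d) (Fin d) ℝ) (b gk : Fin d → ℝ)
    (hC : C = lam • (1 : Matrix (Fin d) (Fin d) ℝ) +
      ∑ j ∈ Finset.Icc (max 1 (k - M - 1)) (k - 1), vecMulVec (s j) (s j))
    (hb : b = ∑ j ∈ Finset.Icc (max 1 (k - M - 1)) (k - 1), (gradf (x j) ⬝ᵥ s j) • s j)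
    (hgk : gk = C⁻¹ *ᵥ b)
    (U : ℝ) (hU : euclNorm (gradf (x k)) ≤ U)
    (sk : Fin d → ℝ) (hsk1 : euclNorm sk = 1)
    (hskmax : ∀ sv : Fin d → ℝ, euclNorm sv = 1 →
      gk ⬝ᵥ sv + Real.sqrt lam * U * Real.sqrt (sv ⬝ᵥ (C⁻¹ *ᵥ sv)) ≤
      gk ⬝ᵥ sk + Real.sqrt lam * U * Real.sqrt (sk ⬝ᵥ (C⁻¹ *ᵥ sk))) :
    ((euclNorm (gradf (x k)))⁻¹ • gradf (x k) - sk) ⬝ᵥ gradf (x k) ≤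
      2 * (Real.sqrt ((d : ℝ) * ((M : ℝ) + 1) / lam) *
        ∑ i ∈ Finset.Icc (max 1 (k - M - 1)) (k - 1),
          euclNorm (gradf (x (i + 1)) - gradf (x i))) +
      2 * Real.sqrt lam * U * Real.sqrt (sk ⬝ᵥ (C⁻¹ *ᵥ sk)) :=
  stmt_12_general d M k lam hlam gradf x hgx s hs C b gk hC hb hgk U hU sk hsk1 hskmax
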